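/- arXiv:2508.19582 — 2 statements merged into one kernel-verified Lean document; each statement's English description precedes it below -/
import Mathlib

section
/- For the bivariate polynomial q(x,y) = Σ_{j=0}^{d} x^j y^{d-j} and integers 0 ≤ a ≤ d, the capacity Cap_{(d-a, a)}(q) := inf_{x,y>0} q(x,y)/(x^{d-a} y^{a}) is at most min{ (a+1)^{a+1}/a^a , (d-a+1)^{d-a+1}/(d-a)^{d-a} } (with the convention 0^0 = 1). -/
/-!
Evaluating at `(x, y) = (t + 1, t)` and discarding the negative term of
`q(t + 1, t) = (t + 1)^(d + 1) - t^(d + 1)` bounds the capacity by `(t + 1)^(a + 1) / t^a` for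
every `t > 0`; the choice `t = a` gives the first bound, and `t → 0` handles `a = 0`.
Since `q` is symmetric, swapping `x` and `y` turns the weight `(d - a, a)` into `(a, d - a)`,
which gives the second bound.
-/

open Finset

def capacityRatios (d a : ℕ) : Set ℝ :=
  {r : ℝ | ∃ x y : ℝ, 0 < x ∧ 0 < y ∧
    r = (∑ j ∈ range (d + 1), x ^ j * y ^ (d - j)) / (x ^ (d - a) * y ^ a)}

lemma capacityRatios_bddBelow (d a : ℕ) : BddBelow (capacityRatios d a) := by
  refine ⟨0, ?_⟩
  rintro r ⟨x, y, hx, hy, rfl⟩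
  have : 0 ≤ ∑ j ∈ range (d + 1), x ^ j * y ^ (d - j) :=
    sum_nonneg fun j _ ↦ by positivity
  positivity

lemma sum_range_succ_pow_mul_pow_comm (d : ℕ) (x y : ℝ) :
    ∑ j ∈ range (d + 1), x ^ j * y ^ (d - j) = ∑ j ∈ range (d + 1), y ^ j * x ^ (d - j) := by
  simpa only [Nat.add_sub_cancel] using geom_sum₂_comm x y (d + 1)

lemma capacityRatios_sub {d a : ℕ} (h : a ≤ d) : capacityRatios d (d - a) = capacityRatios d a := by
  have key : ∀ {b : ℕ}, b ≤ d → capacityRatios d (d - b) ⊆ capacityRatios d b := by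
    rintro b hb r ⟨x, y, hx, hy, rfl⟩
    refine ⟨y, x, hy, hx, ?_⟩
    rw [sum_range_succ_pow_mul_pow_comm, Nat.sub_sub_self hb, mul_comm]
  refine (key h).antisymm ?_
  simpa only [Nat.sub_sub_self h] using key (Nat.sub_le d a)

lemma sum_range_succ_pow_add_one_mul_pow_le (d : ℕ) {t : ℝ} (ht : 0 ≤ t) :
    ∑ j ∈ range (d + 1), (t + 1) ^ j * t ^ (d - j) ≤ (t + 1) ^ (d + 1) := by
  have h := geom_sum₂_mul_add 1 t (d + 1)
  rw [add_comm 1 t, Nat.add_sub_cancel, mul_one] at h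
  have : 0 ≤ t ^ (d + 1) := by positivity
  linarith

lemma sInf_capacityRatios_le {d a : ℕ} (h : a ≤ d) {t : ℝ} (ht : 0 < t) :
    sInf (capacityRatios d a) ≤ (t + 1) ^ (a + 1) / t ^ a := by
  refine csInf_le_of_le (capacityRatios_bddBelow d a) ⟨t + 1, t, by positivity, ht, rfl⟩ ?_
  have hsplit : (t + 1) ^ (d + 1) = (t + 1) ^ (d - a) * (t + 1) ^ (a + 1) := by
    rw [← pow_add]; congr 1; omega
  calc (∑ j ∈ range (d + 1), (t + 1) ^ j * t ^ (d - j)) / ((t + 1) ^ (d - a) * t ^ a)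
      ≤ (t + 1) ^ (d + 1) / ((t + 1) ^ (d - a) * t ^ a) := by
        gcongr; exact sum_range_succ_pow_add_one_mul_pow_le d ht.le
    _ = (t + 1) ^ (a + 1) / t ^ a := by
        rw [hsplit, mul_div_mul_left _ _ (by positivity)]

lemma sInf_capacityRatios_le_succ_pow_div_pow {d a : ℕ} (h : a ≤ d) :
    sInf (capacityRatios d a) ≤ ((a : ℝ) + 1) ^ (a + 1) / (a : ℝ) ^ a := by
  rcases Nat.eq_zero_or_pos a with rfl | ha
  · refine le_of_forall_pos_le_add fun ε hε ↦ ?_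
    simpa [add_comm] using sInf_capacityRatios_le h hε
  · exact sInf_capacityRatios_le h (Nat.cast_pos.mpr ha)

theorem capacity_bivariate_upper (d a : ℕ) (h : a ≤ d) :
    sInf {r : ℝ | ∃ x y : ℝ, 0 < x ∧ 0 < y ∧
        r = (∑ j ∈ Finset.range (d + 1), x ^ j * y ^ (d - j)) /
            (x ^ (d - a) * y ^ a)} ≤
      min (((a : ℝ) + 1) ^ (a + 1) / (a : ℝ) ^ a)
        (((d : ℝ) - a + 1) ^ (d - a + 1) / ((d : ℝ) - a) ^ (d - a)) := by
  refine le_min (sInf_capacityRatios_le_succ_pow_div_pow h) ?_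
  rw [← Nat.cast_sub h]
  change sInf (capacityRatios d a) ≤ _
  rw [← capacityRatios_sub h]
  exact sInf_capacityRatios_le_succ_pow_div_pow (Nat.sub_le d a)
end

section
/- Let f : ℝ^k → ℝ be defined by f(y) = log V(e^{y₁}, …, e^{y_k}) where V(x) = Σ_μ c_μ x^μ is a polynomial with nonnegative coefficients, not identically zero, that is homogeneous of degree n (all exponent vectors μ satisfy |μ| = n). Then f is n-Lipschitz with respect to the Euclidean norm on ℝ^k. -/
/-!
Every coordinate of `exp y` is at most `exp ‖y - z‖` times the corresponding coordinate of
`exp z`. A polynomial with nonnegative coefficients is monotone on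
the nonnegative orthant, and a homogeneous one of degree `n` scales by `tⁿ`, so
`V (exp y) ≤ exp (n ‖y - z‖) · V (exp z)`; taking logarithms and swapping `y, z` gives the claim.
-/

open MvPolynomial

namespace MvPolynomial

variable {σ R : Type*} [CommSemiring R]

theorem IsHomogeneous.eval_const_mul {φ : MvPolynomial σ R} {n : ℕ} (hφ : φ.IsHomogeneous n)
    (t : R) (x : σ → R) : eval (fun i => t * x i) φ = t ^ n * eval x φ := by
  simp only [eval_eq, Finset.mul_sum]
  refine Finset.sum_congr rfl fun d hd => ?_
  have hdeg : ∑ i ∈ d.support, d i = n := by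
    rw [← Finsupp.degree_apply, Finsupp.degree_eq_weight_one]
    exact hφ (mem_support_iff.mp hd)
  simp only [mul_pow, Finset.prod_mul_distrib, Finset.prod_pow_eq_pow_sum, hdeg]
  ring

variable [PartialOrder R]

theorem eval_le_eval_of_coeff_nonneg [IsOrderedRing R] {φ : MvPolynomial σ R}
    (hφ : ∀ d, 0 ≤ φ.coeff d) {x y : σ → R} (hx : 0 ≤ x) (hxy : x ≤ y) : eval x φ ≤ eval y φ := by
  simp only [eval_eq]
  refine Finset.sum_le_sum fun d _ => mul_le_mul_of_nonneg_left ?_ (hφ d)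
  exact Finset.prod_le_prod (fun i _ => pow_nonneg (hx i) _)
    fun i _ => pow_le_pow_left₀ (hx i) (hxy i) _

theorem eval_pos_of_coeff_nonneg [IsStrictOrderedRing R] {φ : MvPolynomial σ R}
    (hφ : ∀ d, 0 ≤ φ.coeff d) (hφ0 : φ ≠ 0) {x : σ → R} (hx : ∀ i, 0 < x i) :
    0 < eval x φ := by
  obtain ⟨d, hd⟩ := ne_zero_iff.mp hφ0
  rw [eval_eq]
  refine Finset.sum_pos' (fun e _ => mul_nonneg (hφ e) ?_) ⟨d, mem_support_iff.mpr hd, ?_⟩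
  · exact Finset.prod_nonneg fun i _ => pow_nonneg (hx i).le _
  · exact mul_pos ((hφ d).lt_of_ne' hd) (Finset.prod_pos fun i _ => pow_pos (hx i) _)

end MvPolynomial

theorem log_eval_exp_sub_le {σ : Type*} {n : ℕ} {V : MvPolynomial σ ℝ}
    (hV : ∀ μ, 0 ≤ V.coeff μ) (hV0 : V ≠ 0) (hhom : V.IsHomogeneous n)
    {y z : σ → ℝ} {c : ℝ} (hyz : ∀ i, y i - z i ≤ c) :
    Real.log (eval (fun i => Real.exp (y i)) V) -
      Real.log (eval (fun i => Real.exp (z i)) V) ≤ n * c := by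
  have hpos : ∀ w : σ → ℝ, 0 < eval (fun i => Real.exp (w i)) V := fun w =>
    eval_pos_of_coeff_nonneg hV hV0 fun i => Real.exp_pos _
  have hle : eval (fun i => Real.exp (y i)) V ≤
      Real.exp (n * c) * eval (fun i => Real.exp (z i)) V :=
    calc eval (fun i => Real.exp (y i)) V
        ≤ eval (fun i => Real.exp c * Real.exp (z i)) V := by
          refine eval_le_eval_of_coeff_nonneg hV (fun i => (Real.exp_pos _).le) fun i => ?_
          rw [← Real.exp_add]
          exact Real.exp_le_exp.mpr (by linarith [hyz i])
      _ = Real.exp (n * c) * eval (fun i => Real.exp (z i)) V := by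
          rw [hhom.eval_const_mul, ← Real.exp_nat_mul]
  have hlog := Real.log_le_log (hpos y) hle
  rw [Real.log_mul (Real.exp_pos _).ne' (hpos z).ne', Real.log_exp] at hlog
  linarith

theorem log_eval_exp_lipschitz {k n : ℕ} (V : MvPolynomial (Fin k) ℝ)
    (hV : ∀ μ, 0 ≤ V.coeff μ) (hV0 : V ≠ 0) (hhom : V.IsHomogeneous n) :
    ∀ y z : EuclideanSpace ℝ (Fin k),
      |Real.log (eval (fun i => Real.exp (y i)) V) -
          Real.log (eval (fun i => Real.exp (z i)) V)| ≤ n * ‖y - z‖ := by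
  intro y z
  have hcoord : ∀ (u v : EuclideanSpace ℝ (Fin k)) i, u i - v i ≤ ‖u - v‖ := fun u v i =>
    (le_abs_self _).trans (by simpa using PiLp.norm_apply_le (u - v) i)
  rw [abs_sub_le_iff]
  refine ⟨log_eval_exp_sub_le hV hV0 hhom (hcoord y z), ?_⟩
  rw [norm_sub_rev]
  exact log_eval_exp_sub_le hV hV0 hhom (hcoord z y)
end
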